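/- arXiv:2209.14894 — 5 statements merged into one kernel-verified Lean document; each statement's English description precedes it below -/
import Mathlib

section
/- Let α₁, β₁, γ₁ ∈ (0, 2π) and define the complex numbers z = cos(β₁/2)·cos((α₁+γ₁)/2) + i·sin(β₁/2)·cos((α₁−γ₁)/2) and z₁ = cos(β₁/2)·sin((α₁+γ₁)/2) − i·sin(β₁/2)·sin((α₁−γ₁)/2), and assume z ≠ 0 and z₁ ≠ 0. Set α₂ = arg z + arg z₁, β₂ = 2·arg(|z/z₁| + i), and γ₂ = arg z − arg z₁. Then there exists a nonzero complex number c such that Z(γ₁)·X(β₁)·Z(α₁) = c · X(γ₂)·Z(β₂)·X(α₂). Moreover, if α₁ = γ₁ then α₂ ≡ γ₂ (mod 2π), and if α₁ + γ₁ = 2π then α₂ ≡ π + γ₂ (mod 2π). -/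
open Real

/-- The 2×2 Hadamard matrix `(1/√2)·[[1,1],[1,−1]]`. -/
noncomputable def Hmat : Matrix (Fin 2) (Fin 2) ℂ :=
  ((Real.sqrt 2 : ℂ))⁻¹ • !![1, 1; 1, -1]

/-- The green phase `Z(θ) = [[1,0],[0,e^{iθ}]]`. -/
noncomputable def Zmat (θ : ℝ) : Matrix (Fin 2) (Fin 2) ℂ :=
  !![1, 0; 0, Complex.exp ((θ : ℂ) * Complex.I)]

/-- The red phase `X(θ) = H·Z(θ)·H`. -/
noncomputable def Xmat (θ : ℝ) : Matrix (Fin 2) (Fin 2) ℂ :=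
  Hmat * Zmat θ * Hmat

/-!
Up to the global phase `e^{i(α+β+γ)/2}`, `Z(γ)·X(β)·Z(α)` is the SU(2) matrix with parameters
`a = cos(β/2)·e^{i(α+γ)/2}` and `b = sin(β/2)·e^{i(α-γ)/2}`. Conjugating by `H` sends the
parameters `(a, b)` to `(Re a + i·Re b, Im a - i·Im b) = (z, z₁)`, while
`X(γ)·Z(β)·X(α) = H·Z(γ)·X(β)·Z(α)·H`. So it suffices that `α₂, β₂, γ₂` write `z, z₁` in the
same polar form, which holds because `|z|² + |z₁|² = 1`. Finally `α₂ - γ₂ = 2·arg z₁`, and `z₁` is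
real when `α₁ = γ₁` and purely imaginary when `α₁ + γ₁ = 2π`.
-/

open Complex ComplexConjugate

/-- The Cayley–Klein parametrisation of SU(2) (for `‖a‖² + ‖b‖² = 1`), with the off-diagonal
parameter twisted by `-I` so that `X(θ)` has real parameters. -/
noncomputable def su2OfPair (a b : ℂ) : Matrix (Fin 2) (Fin 2) ℂ :=
  !![conj a, -I * b; -I * conj b, a]

theorem su2OfPair_mul (a b c d : ℂ) :
    su2OfPair a b * su2OfPair c d = su2OfPair (a * c - conj b * d) (conj a * d + b * c) := by
  ext i j
  fin_cases i <;> fin_cases j <;>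
    simp [su2OfPair, Matrix.mul_apply] <;> ring_nf <;> simp only [I_sq] <;> ring

theorem ofReal_sqrt_two_inv_mul_self : ((√2 : ℝ) : ℂ)⁻¹ * ((√2 : ℝ) : ℂ)⁻¹ = 2⁻¹ := by
  rw [← mul_inv, ← ofReal_mul, Real.mul_self_sqrt zero_le_two, ofReal_ofNat]

theorem Hmat_mul_Hmat : Hmat * Hmat = 1 := by
  rw [Hmat, Matrix.smul_mul, Matrix.mul_smul, smul_smul, ofReal_sqrt_two_inv_mul_self]
  ext i j
  fin_cases i <;> fin_cases j <;> norm_num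

theorem Hmat_mul_su2OfPair_mul_Hmat (a b : ℂ) :
    Hmat * su2OfPair a b * Hmat = su2OfPair (a.re + I * b.re) (a.im - I * b.im) := by
  simp only [Hmat, Matrix.smul_mul, Matrix.mul_smul, smul_smul, ofReal_sqrt_two_inv_mul_self]
  ext i j
  fin_cases i <;> fin_cases j <;>
    simp [su2OfPair, Complex.ext_iff] <;> constructor <;> ring

theorem Zmat_eq_smul_su2OfPair (θ : ℝ) :
    Zmat θ = exp (↑(θ / 2) * I) • su2OfPair (exp (↑(θ / 2) * I)) 0 := by
  set e := exp (↑(θ / 2) * I)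
  have he : e * conj e = 1 := by
    rw [mul_conj, normSq_eq_norm_sq, norm_exp_ofReal_mul_I]; norm_num
  have he2 : exp (↑θ * I) = e * e := by
    rw [← Complex.exp_add]; push_cast; ring_nf
  ext i j
  fin_cases i <;> fin_cases j <;> simp [Zmat, su2OfPair, he, he2]

theorem Xmat_eq_smul_su2OfPair (θ : ℝ) :
    Xmat θ = exp (↑(θ / 2) * I) • su2OfPair (Real.cos (θ / 2)) (Real.sin (θ / 2)) := by
  rw [Xmat, Zmat_eq_smul_su2OfPair, Matrix.mul_smul, Matrix.smul_mul, Hmat_mul_su2OfPair_mul_Hmat]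
  rw [exp_ofReal_mul_I_re, exp_ofReal_mul_I_im]
  simp

theorem Zmat_mul_Xmat_mul_Zmat (α β γ : ℝ) :
    Zmat γ * Xmat β * Zmat α = exp (↑((α + β + γ) / 2) * I) •
      su2OfPair (Real.cos (β / 2) * exp (↑((α + γ) / 2) * I))
        (Real.sin (β / 2) * exp (↑((α - γ) / 2) * I)) := by
  have hsum : exp (↑((α + γ) / 2) * I) = exp (↑(γ / 2) * I) * exp (↑(α / 2) * I) := by
    rw [← Complex.exp_add]; push_cast; ring_nf
  have hdiff : exp (↑((α - γ) / 2) * I) = conj (exp (↑(γ / 2) * I)) * exp (↑(α / 2) * I) := by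
    rw [← exp_conj, ← Complex.exp_add]; simp only [map_mul, conj_ofReal, conj_I]; push_cast; ring_nf
  have htotal : exp (↑((α + β + γ) / 2) * I) =
      exp (↑(γ / 2) * I) * exp (↑(β / 2) * I) * exp (↑(α / 2) * I) := by
    rw [← Complex.exp_add, ← Complex.exp_add]; push_cast; ring_nf
  simp only [Zmat_eq_smul_su2OfPair, Xmat_eq_smul_su2OfPair, Matrix.smul_mul, Matrix.mul_smul,
    smul_smul, su2OfPair_mul, hsum, hdiff, htotal]
  congr 1
  · ring
  · congr 1 <;> simp only [map_zero] <;> ring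

theorem Xmat_mul_Zmat_mul_Xmat (α β γ : ℝ) :
    Xmat γ * Zmat β * Xmat α = Hmat * (Zmat γ * Xmat β * Zmat α) * Hmat := by
  simp only [Xmat, Matrix.mul_assoc]

theorem Hmat_mul_Hmat_mul_mul_Hmat_mul_Hmat (M : Matrix (Fin 2) (Fin 2) ℂ) :
    Hmat * (Hmat * M * Hmat) * Hmat = M := by
  simp only [← Matrix.mul_assoc, Hmat_mul_Hmat, Matrix.one_mul]
  rw [Matrix.mul_assoc, Hmat_mul_Hmat, Matrix.mul_one]

theorem norm_ofReal_norm_div_add_I {z w : ℂ} (hw : w ≠ 0) (h : ‖z‖ ^ 2 + ‖w‖ ^ 2 = 1) :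
    ‖(‖z / w‖ : ℂ) + I‖ = ‖w‖⁻¹ := by
  have hw' : 0 < ‖w‖ := norm_pos_iff.mpr hw
  rw [← one_mul I, ← ofReal_one, norm_add_mul_I, norm_div, one_pow,
    ← Real.sqrt_sq (inv_nonneg.2 hw'.le)]
  congr 1
  field_simp
  linear_combination h

theorem cos_arg_ofReal_norm_div_add_I {z w : ℂ} (hw : w ≠ 0) (h : ‖z‖ ^ 2 + ‖w‖ ^ 2 = 1) :
    Real.cos (arg ((‖z / w‖ : ℂ) + I)) = ‖z‖ := by
  have hw' : 0 < ‖w‖ := norm_pos_iff.mpr hw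
  rw [cos_arg (by simp [Complex.ext_iff]), norm_ofReal_norm_div_add_I hw h]
  simp only [Complex.norm_div, ofReal_div, add_re, div_ofReal_re, ofReal_re, I_re, add_zero,
    div_inv_eq_mul]
  field_simp

theorem sin_arg_ofReal_norm_div_add_I {z w : ℂ} (hw : w ≠ 0) (h : ‖z‖ ^ 2 + ‖w‖ ^ 2 = 1) :
    Real.sin (arg ((‖z / w‖ : ℂ) + I)) = ‖w‖ := by
  rw [sin_arg, norm_ofReal_norm_div_add_I hw h]
  simp

theorem Hmat_mul_Zmat_mul_Xmat_mul_Zmat_mul_Hmat (α β γ : ℝ) :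
    Hmat * (Zmat γ * Xmat β * Zmat α) * Hmat = exp (↑((α + β + γ) / 2) * I) •
      su2OfPair (↑(Real.cos (β / 2) * Real.cos ((α + γ) / 2)) +
          I * ↑(Real.sin (β / 2) * Real.cos ((α - γ) / 2)))
        (↑(Real.cos (β / 2) * Real.sin ((α + γ) / 2)) -
          I * ↑(Real.sin (β / 2) * Real.sin ((α - γ) / 2))) := by
  rw [Zmat_mul_Xmat_mul_Zmat, Matrix.mul_smul, Matrix.smul_mul, Hmat_mul_su2OfPair_mul_Hmat]
  simp only [re_ofReal_mul, im_ofReal_mul, exp_ofReal_mul_I_re, exp_ofReal_mul_I_im, ofReal_mul]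

theorem sq_norm_add_sq_norm_of_cos_sin (θ φ ψ : ℝ) :
    ‖↑(Real.cos θ * Real.cos φ) + I * ↑(Real.sin θ * Real.cos ψ)‖ ^ 2 +
      ‖↑(Real.cos θ * Real.sin φ) - I * ↑(Real.sin θ * Real.sin ψ)‖ ^ 2 = 1 := by
  simp only [Complex.sq_norm, normSq_apply, add_re, add_im, sub_re, sub_im, mul_re, mul_im, I_re,
    I_im, ofReal_re, ofReal_im]
  linear_combination Real.cos θ ^ 2 * Real.sin_sq_add_cos_sq φ +
    Real.sin θ ^ 2 * Real.sin_sq_add_cos_sq ψ + Real.sin_sq_add_cos_sq θ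

theorem Zmat_mul_Xmat_mul_Zmat_of_polar {z w : ℂ} (hw : w ≠ 0) (h : ‖z‖ ^ 2 + ‖w‖ ^ 2 = 1) :
    Zmat (arg z - arg w) * Xmat (2 * arg ((‖z / w‖ : ℂ) + I)) * Zmat (arg z + arg w) =
      exp (↑(arg z + arg ((‖z / w‖ : ℂ) + I)) * I) • su2OfPair z w := by
  rw [Zmat_mul_Xmat_mul_Zmat, mul_div_cancel_left₀ _ two_ne_zero,
    cos_arg_ofReal_norm_div_add_I hw h, sin_arg_ofReal_norm_div_add_I hw h,
    show (arg z + arg w + (arg z - arg w)) / 2 = arg z by ring,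
    show (arg z + arg w - (arg z - arg w)) / 2 = arg w by ring,
    norm_mul_exp_arg_mul_I, norm_mul_exp_arg_mul_I]
  congr 4
  ring

theorem two_nsmul_coe_arg_eq_zero_of_im_eq_zero {z : ℂ} (h : z.im = 0) :
    (2 : ℕ) • (arg z : Real.Angle) = 0 := by
  rw [Real.Angle.two_nsmul_eq_zero_iff]
  rcases le_or_gt 0 z.re with hre | hre
  · exact .inl (by rw [arg_eq_zero_iff.mpr ⟨hre, h⟩, Real.Angle.coe_zero])
  · exact .inr (by rw [arg_eq_pi_iff.mpr ⟨hre, h⟩])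

theorem two_nsmul_coe_arg_eq_pi_of_re_eq_zero {z : ℂ} (hz : z ≠ 0) (h : z.re = 0) :
    (2 : ℕ) • (arg z : Real.Angle) = π := by
  have him : z.im ≠ 0 := fun him => hz (Complex.ext h him)
  rw [Real.Angle.two_nsmul_eq_pi_iff]
  rcases him.lt_or_gt with him | him
  · exact .inr (by rw [arg_eq_neg_pi_div_two_iff.mpr ⟨h, him⟩, neg_div])
  · exact .inl (by rw [arg_eq_pi_div_two_iff.mpr ⟨h, him⟩])

theorem zxz_to_xzx_general (α₁ β₁ γ₁ : ℝ)
    (z z₁ : ℂ)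
    (hz : z = (↑(Real.cos (β₁ / 2) * Real.cos ((α₁ + γ₁) / 2)) : ℂ) +
      Complex.I * (↑(Real.sin (β₁ / 2) * Real.cos ((α₁ - γ₁) / 2)) : ℂ))
    (hz₁ : z₁ = (↑(Real.cos (β₁ / 2) * Real.sin ((α₁ + γ₁) / 2)) : ℂ) -
      Complex.I * (↑(Real.sin (β₁ / 2) * Real.sin ((α₁ - γ₁) / 2)) : ℂ))
    (hz₁0 : z₁ ≠ 0)
    (α₂ β₂ γ₂ : ℝ)
    (hα₂ : α₂ = Complex.arg z + Complex.arg z₁)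
    (hβ₂ : β₂ = 2 * Complex.arg (((‖z / z₁‖ : ℝ) : ℂ) + Complex.I))
    (hγ₂ : γ₂ = Complex.arg z - Complex.arg z₁) :
    (∃ c : ℂ, c ≠ 0 ∧
      Zmat γ₁ * Xmat β₁ * Zmat α₁ = c • (Xmat γ₂ * Zmat β₂ * Xmat α₂)) ∧
    (α₁ = γ₁ → (α₂ : Real.Angle) = (γ₂ : Real.Angle)) ∧
    (α₁ + γ₁ = 2 * π → (α₂ : Real.Angle) = (π : ℝ) + (γ₂ : Real.Angle)) := by
  have hnorm : ‖z‖ ^ 2 + ‖z₁‖ ^ 2 = 1 := hz ▸ hz₁ ▸ sq_norm_add_sq_norm_of_cos_sin _ _ _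
  have hα₂γ₂ : (α₂ : Real.Angle) = γ₂ + (2 : ℕ) • (arg z₁ : Real.Angle) := by
    rw [← Real.Angle.coe_nsmul, ← Real.Angle.coe_add, hα₂, hγ₂, nsmul_eq_mul]
    congr 1; push_cast; ring
  refine ⟨?_, fun h => ?_, fun h => ?_⟩
  · refine ⟨exp (↑((α₁ + β₁ + γ₁) / 2) * I) / exp (↑(arg z + arg (↑‖z / z₁‖ + I)) * I),
      div_ne_zero (Complex.exp_ne_zero _) (Complex.exp_ne_zero _), ?_⟩
    rw [← Hmat_mul_Hmat_mul_mul_Hmat_mul_Hmat (Zmat γ₁ * _ * _),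
      Hmat_mul_Zmat_mul_Xmat_mul_Zmat_mul_Hmat, ← hz, ← hz₁, Xmat_mul_Zmat_mul_Xmat, hα₂, hβ₂,
      hγ₂, Zmat_mul_Xmat_mul_Zmat_of_polar hz₁0 hnorm]
    simp only [Matrix.mul_smul, Matrix.smul_mul, smul_smul,
      div_mul_cancel₀ _ (Complex.exp_ne_zero _)]
  · rw [hα₂γ₂, two_nsmul_coe_arg_eq_zero_of_im_eq_zero, add_zero]
    rw [hz₁, h, sub_self, zero_div, Real.sin_zero, mul_zero, ofReal_zero, mul_zero, sub_zero,
      ofReal_im]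
  · rw [hα₂γ₂, two_nsmul_coe_arg_eq_pi_of_re_eq_zero hz₁0, add_comm]
    rw [hz₁, show (α₁ + γ₁) / 2 = π by linarith, Real.sin_pi, mul_zero, ofReal_zero, zero_sub,
      neg_re, re_mul_ofReal, I_re, zero_mul, neg_zero]

/-- Conversion from ZXZ to XZX Euler decompositions of single-qubit unitaries. -/
theorem zxz_to_xzx (α₁ β₁ γ₁ : ℝ)
    (hα : α₁ ∈ Set.Ioo 0 (2 * π)) (hβ : β₁ ∈ Set.Ioo 0 (2 * π))
    (hγ : γ₁ ∈ Set.Ioo 0 (2 * π))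
    (z z₁ : ℂ)
    (hz : z = (↑(Real.cos (β₁ / 2) * Real.cos ((α₁ + γ₁) / 2)) : ℂ) +
      Complex.I * (↑(Real.sin (β₁ / 2) * Real.cos ((α₁ - γ₁) / 2)) : ℂ))
    (hz₁ : z₁ = (↑(Real.cos (β₁ / 2) * Real.sin ((α₁ + γ₁) / 2)) : ℂ) -
      Complex.I * (↑(Real.sin (β₁ / 2) * Real.sin ((α₁ - γ₁) / 2)) : ℂ))
    (hz0 : z ≠ 0) (hz₁0 : z₁ ≠ 0)
    (α₂ β₂ γ₂ : ℝ)
    (hα₂ : α₂ = Complex.arg z + Complex.arg z₁)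
    (hβ₂ : β₂ = 2 * Complex.arg (((‖z / z₁‖ : ℝ) : ℂ) + Complex.I))
    (hγ₂ : γ₂ = Complex.arg z - Complex.arg z₁) :
    (∃ c : ℂ, c ≠ 0 ∧
      Zmat γ₁ * Xmat β₁ * Zmat α₁ = c • (Xmat γ₂ * Zmat β₂ * Xmat α₂)) ∧
    (α₁ = γ₁ → (α₂ : Real.Angle) = (γ₂ : Real.Angle)) ∧
    (α₁ + γ₁ = 2 * π → (α₂ : Real.Angle) = (π : ℝ) + (γ₂ : Real.Angle)) :=
  zxz_to_xzx_general α₁ β₁ γ₁ z z₁ hz hz₁ hz₁0 α₂ β₂ γ₂ hα₂ hβ₂ hγ₂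
end

section
/- Let λ₁, λ₂, λ₃ ∈ ℂ and set τ = (1−λ₂)(λ₁+λ₃) + (1+λ₂)(1+λ₁λ₃), U = (1+λ₂)(λ₁λ₃−1), V = (1−λ₂)(λ₁−λ₃), S = (1−λ₂)(λ₁+λ₃) − (1+λ₂)(1+λ₁λ₃), and T = τ·(U²−V²). Assume S ≠ 0 and T ≠ 0. Then there exist w ∈ ℂ with w² = S/T and τ·w ≠ i, and a nonzero complex number k, such that, setting σ₁ = −i(U+V)w, σ₃ = −i(U−V)w and σ₂ = (τw+i)/(τw−i), one has Z(λ₃)·X(λ₂)·Z(λ₁) = k · X(σ₃)·Z(σ₂)·X(σ₁). -/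
/-!
Take `k = (τw − i)/(8w)` and compare entries. Rescaling the middle phase `Z(b)`, `b = (τw + i)/(τw − i)`, by
`τw − i` gives `diag(τw − i, τw + i)`, and `X(a) diag(p, q) X(c)` depends only on `p ± q`,
`a ± c` and `ac`. For `a = −i(U − V)w`, `c = −i(U + V)w` these are `a + c = −2iUw`,
`a − c = 2iVw`, `ac = −(U² − V²)w²`, and `w² = S/T` turns `τ(U² − V²)w²` into `S`. The result
is `¼ [[τ − S − 2U, τ + S + 2V], [τ + S − 2V, τ − S + 2U]]`, which is also
`Z(λ₃) X(λ₂) Z(λ₁)`. The sign of the square root `w` is free, and `τw = i` and `−τw = i`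
cannot hold together.
-/

/-- Generalized green phase `Z(a) = [[1,0],[0,a]]`. -/
def Zg (a : ℂ) : Matrix (Fin 2) (Fin 2) ℂ := !![1, 0; 0, a]

/-- Generalized red phase `X(a) = [[1+a,1−a],[1−a,1+a]]`. -/
def Xg (a : ℂ) : Matrix (Fin 2) (Fin 2) ℂ := !![1 + a, 1 - a; 1 - a, 1 + a]

open Complex

theorem exists_sq_eq_and_mul_ne (z τ : ℂ) {c : ℂ} (hc : c ≠ 0) :
    ∃ w : ℂ, w ^ 2 = z ∧ τ * w ≠ c := by
  obtain ⟨w, hw⟩ := IsAlgClosed.exists_pow_nat_eq z two_pos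
  by_cases h : τ * w = c
  · refine ⟨-w, by rw [neg_sq, hw], fun h' => hc ?_⟩
    linear_combination -(h + h') / 2
  · exact ⟨w, hw, h⟩

theorem Zg_mul_Xg_mul_Zg (a b c : ℂ) :
    Zg c * Xg b * Zg a = !![1 + b, (1 - b) * a; c * (1 - b), c * a * (1 + b)] := by
  ext i j
  fin_cases i <;> fin_cases j <;>
    simp [Zg, Xg, Matrix.mul_apply, mul_comm, mul_left_comm, mul_assoc]

theorem Xg_mul_diag_mul_Xg (a c p q : ℂ) :
    Xg a * !![p, 0; 0, q] * Xg c =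
      !![(p + q) * (1 + a * c) + (p - q) * (a + c), (p + q) * (1 - a * c) + (p - q) * (a - c);
        (p + q) * (1 - a * c) - (p - q) * (a - c), (p + q) * (1 + a * c) - (p - q) * (a + c)] := by
  ext i j
  fin_cases i <;> fin_cases j <;> simp [Xg, Matrix.mul_apply] <;> ring

theorem smul_Zg_div {d : ℂ} (hd : d ≠ 0) (e : ℂ) : d • Zg (e / d) = !![d, 0; 0, e] := by
  ext i j
  fin_cases i <;> fin_cases j <;> simp [Zg, mul_div_cancel₀ e hd]

theorem Zg_mul_Xg_mul_Zg_eq_smul {l₁ l₂ l₃ τ U V S : ℂ}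
    (hτ : τ = (1 - l₂) * (l₁ + l₃) + (1 + l₂) * (1 + l₁ * l₃))
    (hU : U = (1 + l₂) * (l₁ * l₃ - 1))
    (hV : V = (1 - l₂) * (l₁ - l₃))
    (hS : S = (1 - l₂) * (l₁ + l₃) - (1 + l₂) * (1 + l₁ * l₃)) :
    Zg l₃ * Xg l₂ * Zg l₁ =
      (4 : ℂ)⁻¹ • !![τ - S - 2 * U, τ + S + 2 * V; τ + S - 2 * V, τ - S + 2 * U] := by
  rw [Zg_mul_Xg_mul_Zg]
  subst hτ hU hV hS
  ext i j
  fin_cases i <;> fin_cases j <;>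
    simp only [Matrix.smul_apply, Matrix.of_apply, Matrix.cons_val', Matrix.cons_val_zero,
      Matrix.cons_val_one, Matrix.cons_val_fin_one, Fin.isValue, Fin.zero_eta, Fin.mk_one, smul_eq_mul] <;> ring

theorem smul_Xg_mul_Zg_mul_Xg {τ U V S w : ℂ} (hS : τ * (U ^ 2 - V ^ 2) * w ^ 2 = S)
    (hw : w ≠ 0) (hτw : τ * w ≠ I) :
    ((τ * w - I) / (8 * w)) • (Xg (-I * (U - V) * w) * Zg ((τ * w + I) / (τ * w - I)) *
      Xg (-I * (U + V) * w)) =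
      (4 : ℂ)⁻¹ • !![τ - S - 2 * U, τ + S + 2 * V; τ + S - 2 * V, τ - S + 2 * U] := by
  have hk : ∀ A Z C : Matrix (Fin 2) (Fin 2) ℂ,
      ((τ * w - I) / (8 * w)) • (A * Z * C) = (8 * w)⁻¹ • (A * ((τ * w - I) • Z) * C) := by
    intro A Z C
    rw [mul_smul_comm, smul_mul_assoc, smul_smul, div_eq_inv_mul]
  rw [hk, smul_Zg_div (sub_ne_zero.mpr hτw), Xg_mul_diag_mul_Xg]
  ext i j
  fin_cases i <;> fin_cases j <;>
    simp only [Matrix.smul_apply, Matrix.of_apply, Matrix.cons_val', Matrix.cons_val_zero,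
      Matrix.cons_val_one, Matrix.cons_val_fin_one, Fin.isValue, Fin.zero_eta, Fin.mk_one, smul_eq_mul] <;>
    field_simp <;> ring_nf <;> simp only [I_sq]
  · linear_combination -8 * w * hS
  · linear_combination 8 * w * hS
  · linear_combination 8 * w * hS
  · linear_combination -8 * w * hS

/-- General phases colour-swap law. -/
theorem general_phases_colour_swap (l₁ l₂ l₃ τ U V S T : ℂ)
    (hτ : τ = (1 - l₂) * (l₁ + l₃) + (1 + l₂) * (1 + l₁ * l₃))
    (hU : U = (1 + l₂) * (l₁ * l₃ - 1))
    (hV : V = (1 - l₂) * (l₁ - l₃))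
    (hS : S = (1 - l₂) * (l₁ + l₃) - (1 + l₂) * (1 + l₁ * l₃))
    (hT : T = τ * (U ^ 2 - V ^ 2))
    (hS0 : S ≠ 0) (hT0 : T ≠ 0) :
    ∃ w k : ℂ, w ^ 2 = S / T ∧ τ * w ≠ Complex.I ∧ k ≠ 0 ∧
      Zg l₃ * Xg l₂ * Zg l₁ =
        k • (Xg (-Complex.I * (U - V) * w) *
          Zg ((τ * w + Complex.I) / (τ * w - Complex.I)) *
          Xg (-Complex.I * (U + V) * w)) := by
  obtain ⟨w, hw, hτw⟩ := exists_sq_eq_and_mul_ne (S / T) τ I_ne_zero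
  have hw0 : w ≠ 0 := by
    rintro rfl
    exact div_ne_zero hS0 hT0 (by simpa using hw.symm)
  have hSw : τ * (U ^ 2 - V ^ 2) * w ^ 2 = S := by
    rw [hw, ← hT]
    field_simp
  refine ⟨w, (τ * w - I) / (8 * w), hw, hτw,
    div_ne_zero (sub_ne_zero.mpr hτw) (mul_ne_zero (by norm_num) hw0), ?_⟩
  rw [smul_Xg_mul_Zg_mul_Xg hSw hw0 hτw, Zg_mul_Xg_mul_Zg_eq_smul hτ hU hV hS]
end

section
/- Let λ₁, λ₂, λ₃ ∈ ℂ and set τ = (1−λ₂)(λ₁+λ₃) + (1+λ₂)(1+λ₁λ₃), U = (1+λ₂)(λ₁λ₃−1), V = (1−λ₂)(λ₁−λ₃), S = (1−λ₂)(λ₁+λ₃) − (1+λ₂)(1+λ₁λ₃), and T = τ·(U²−V²). Assume S ≠ 0 and T ≠ 0, let w ∈ ℂ satisfy w² = S/T, and set σ₁ = −i(U+V)w and σ₃ = −i(U−V)w. Then: if λ₁ = λ₃ then σ₁ = σ₃; if λ₁λ₃ = 1 then σ₁ = −σ₃; if λ₁λ₃ = −1 then σ₁·σ₃ = −1; and if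 λ₁ = −λ₃ then σ₁·σ₃ = 1. -/
/-!
Since `I² = -1`, the product `σ₁ σ₃` equals `-(U² - V²) w² = -S / τ`. Each special case then
kills one of the quantities involved: `λ₁ = λ₃` gives `V = 0`, `λ₁ λ₃ = 1` gives `U = 0`, and
`λ₁ λ₃ = -1`, resp. `λ₁ = -λ₃`, gives `S = τ`, resp. `S = -τ`.
-/

open Complex

lemma neg_I_mul_add_mul_neg_I_mul_sub (U V w : ℂ) :
    (-I * (U + V) * w) * (-I * (U - V) * w) = -(U ^ 2 - V ^ 2) * w ^ 2 := by
  linear_combination (U ^ 2 - V ^ 2) * w ^ 2 * I_sq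

lemma neg_I_mul_add_mul_neg_I_mul_sub_eq_neg_div {τ U V S T w : ℂ}
    (hT : T = τ * (U ^ 2 - V ^ 2)) (hT0 : T ≠ 0) (hw : w ^ 2 = S / T) :
    (-I * (U + V) * w) * (-I * (U - V) * w) = -S / τ := by
  have hUV : U ^ 2 - V ^ 2 ≠ 0 := right_ne_zero_of_mul (hT ▸ hT0)
  rw [neg_I_mul_add_mul_neg_I_mul_sub, hw, hT]
  field_simp

theorem colour_swap_special_cases_general (l₁ l₂ l₃ τ U V S T w σ₁ σ₃ : ℂ)
    (hτ : τ = (1 - l₂) * (l₁ + l₃) + (1 + l₂) * (1 + l₁ * l₃))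
    (hU : U = (1 + l₂) * (l₁ * l₃ - 1))
    (hV : V = (1 - l₂) * (l₁ - l₃))
    (hS : S = (1 - l₂) * (l₁ + l₃) - (1 + l₂) * (1 + l₁ * l₃))
    (hT : T = τ * (U ^ 2 - V ^ 2))
    (hT0 : T ≠ 0)
    (hw : w ^ 2 = S / T)
    (hσ₁ : σ₁ = -Complex.I * (U + V) * w)
    (hσ₃ : σ₃ = -Complex.I * (U - V) * w) :
    (l₁ = l₃ → σ₁ = σ₃) ∧
    (l₁ * l₃ = 1 → σ₁ = -σ₃) ∧
    (l₁ * l₃ = -1 → σ₁ * σ₃ = -1) ∧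
    (l₁ = -l₃ → σ₁ * σ₃ = 1) := by
  have hτ0 : τ ≠ 0 := left_ne_zero_of_mul (hT ▸ hT0)
  have hprod : σ₁ * σ₃ = -S / τ := by
    rw [hσ₁, hσ₃]
    exact neg_I_mul_add_mul_neg_I_mul_sub_eq_neg_div hT hT0 hw
  refine ⟨fun h => ?_, fun h => ?_, fun h => ?_, fun h => ?_⟩
  · have hV0 : V = 0 := by rw [hV, h, sub_self, mul_zero]
    rw [hσ₁, hσ₃, hV0, add_zero, sub_zero]
  · have hU0 : U = 0 := by rw [hU, h, sub_self, mul_zero]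
    rw [hσ₁, hσ₃, hU0]
    ring
  · have hSτ : S = τ := by
      rw [hS, hτ]
      linear_combination -2 * (1 + l₂) * h
    rw [hprod, hSτ, neg_div, div_self hτ0]
  · have hSτ : S = -τ := by
      rw [hS, hτ, h]
      ring
    rw [hprod, hSτ, neg_neg, div_self hτ0]

/-- Special cases of the general phases colour-swap law: relations between `σ₁` and `σ₃`. -/
theorem colour_swap_special_cases (l₁ l₂ l₃ τ U V S T w σ₁ σ₃ : ℂ)
    (hτ : τ = (1 - l₂) * (l₁ + l₃) + (1 + l₂) * (1 + l₁ * l₃))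
    (hU : U = (1 + l₂) * (l₁ * l₃ - 1))
    (hV : V = (1 - l₂) * (l₁ - l₃))
    (hS : S = (1 - l₂) * (l₁ + l₃) - (1 + l₂) * (1 + l₁ * l₃))
    (hT : T = τ * (U ^ 2 - V ^ 2))
    (hS0 : S ≠ 0) (hT0 : T ≠ 0)
    (hw : w ^ 2 = S / T)
    (hσ₁ : σ₁ = -Complex.I * (U + V) * w)
    (hσ₃ : σ₃ = -Complex.I * (U - V) * w) :
    (l₁ = l₃ → σ₁ = σ₃) ∧
    (l₁ * l₃ = 1 → σ₁ = -σ₃) ∧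
    (l₁ * l₃ = -1 → σ₁ * σ₃ = -1) ∧
    (l₁ = -l₃ → σ₁ * σ₃ = 1) :=
  colour_swap_special_cases_general l₁ l₂ l₃ τ U V S T w σ₁ σ₃ hτ hU hV hS hT hT0 hw hσ₁ hσ₃
end

section
/- Every element r of the subring ℤ[1/2, e^{iπ/4}] of ℂ can be written as r = a₀·e^{iα₀} + a₁·e^{iα₁} + a₂·e^{iα₂} + a₃·e^{iα₃}, where each aⱼ is a nonnegative element of ℤ[1/2] and each αⱼ equals jπ/4 or jπ/4 + π. -/
open Real

namespace RepAux

noncomputable def ζ : ℂ := Complex.exp (((π / 4 : ℝ) : ℂ) * Complex.I)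

lemma zeta_pow_four : ζ ^ 4 = -1 := by
  rw [ζ, ← Complex.exp_nat_mul]
  have h : (4 : ℕ) * (((π / 4 : ℝ) : ℂ) * Complex.I) = (π : ℂ) * Complex.I := by
    push_cast; ring
  rw [h, Complex.exp_pi_mul_I]

lemma zeta_pow (j : Fin 4) :
    Complex.exp ((((j : ℝ) * π / 4 : ℝ) : ℂ) * Complex.I) = ζ ^ (j : ℕ) := by
  rw [ζ, ← Complex.exp_nat_mul]
  congr 1
  push_cast
  ring

lemma expand (b : Fin 4 → ℂ) :
    ∑ j : Fin 4, b j * ζ ^ (j : ℕ) = b 0 + b 1 * ζ + b 2 * ζ ^ 2 + b 3 * ζ ^ 3 := by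
  norm_num [Fin.sum_univ_four, show ((3 : Fin 4) : ℕ) = 3 from rfl]

lemma key : ∀ r ∈ Subring.closure ({(1 / 2 : ℂ), ζ} : Set ℂ),
    ∃ b : Fin 4 → ℝ,
      (∀ j, ((b j : ℂ)) ∈ Subring.closure ({(1 / 2 : ℂ)} : Set ℂ)) ∧
      r = ∑ j : Fin 4, (b j : ℂ) * ζ ^ (j : ℕ) := by
  intro r hr
  induction hr using Subring.closure_induction with
  | mem x hx =>
    rcases hx with hx | hx
    · exact ⟨![1/2, 0, 0, 0], by
        intro j; fin_cases j <;> simp <;>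
          first
          | exact zero_mem _
          | exact Subring.subset_closure (by norm_num), by
        subst hx; simp [Fin.sum_univ_four]⟩
    · exact ⟨![0, 1, 0, 0], by
        intro j; fin_cases j <;> simp <;> first | exact zero_mem _ | exact one_mem _, by
        simp at hx; subst hx; simp [Fin.sum_univ_four, Fin.val_one]⟩
  | zero => exact ⟨![0,0,0,0], by intro j; fin_cases j <;> simp <;> exact zero_mem _,
      by simp [Fin.sum_univ_four]⟩
  | one => exact ⟨![1,0,0,0],
      by intro j; fin_cases j <;> simp <;> first | exact zero_mem _ | exact one_mem _,
      by simp [Fin.sum_univ_four]⟩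
  | add x y hx hy ihx ihy =>
    obtain ⟨b, hb, rfl⟩ := ihx
    obtain ⟨c, hc, rfl⟩ := ihy
    refine ⟨b + c, fun j => ?_, ?_⟩
    · simp only [Pi.add_apply]; push_cast; exact add_mem (hb j) (hc j)
    · rw [← Finset.sum_add_distrib]
      refine Finset.sum_congr rfl fun j _ => ?_
      simp only [Pi.add_apply]; push_cast; ring
  | neg x hx ihx =>
    obtain ⟨b, hb, rfl⟩ := ihx
    refine ⟨-b, fun j => ?_, ?_⟩
    · simp only [Pi.neg_apply]; push_cast; exact neg_mem (hb j)
    · rw [← Finset.sum_neg_distrib]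
      refine Finset.sum_congr rfl fun j _ => ?_
      simp only [Pi.neg_apply]; push_cast; ring
  | mul x y hx hy ihx ihy =>
    obtain ⟨b, hb, rfl⟩ := ihx
    obtain ⟨c, hc, rfl⟩ := ihy
    refine ⟨![b 0 * c 0 - b 1 * c 3 - b 2 * c 2 - b 3 * c 1,
             b 0 * c 1 + b 1 * c 0 - b 2 * c 3 - b 3 * c 2,
             b 0 * c 2 + b 1 * c 1 + b 2 * c 0 - b 3 * c 3,
             b 0 * c 3 + b 1 * c 2 + b 2 * c 1 + b 3 * c 0], fun j => ?_, ?_⟩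
    · fin_cases j
      · show ((b 0 * c 0 - b 1 * c 3 - b 2 * c 2 - b 3 * c 1 : ℝ) : ℂ) ∈ _
        push_cast
        exact sub_mem (sub_mem (sub_mem (mul_mem (hb 0) (hc 0)) (mul_mem (hb 1) (hc 3)))
          (mul_mem (hb 2) (hc 2))) (mul_mem (hb 3) (hc 1))
      · show ((b 0 * c 1 + b 1 * c 0 - b 2 * c 3 - b 3 * c 2 : ℝ) : ℂ) ∈ _
        push_cast
        exact sub_mem (sub_mem (add_mem (mul_mem (hb 0) (hc 1)) (mul_mem (hb 1) (hc 0)))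
          (mul_mem (hb 2) (hc 3))) (mul_mem (hb 3) (hc 2))
      · show ((b 0 * c 2 + b 1 * c 1 + b 2 * c 0 - b 3 * c 3 : ℝ) : ℂ) ∈ _
        push_cast
        exact sub_mem (add_mem (add_mem (mul_mem (hb 0) (hc 2)) (mul_mem (hb 1) (hc 1)))
          (mul_mem (hb 2) (hc 0))) (mul_mem (hb 3) (hc 3))
      · show ((b 0 * c 3 + b 1 * c 2 + b 2 * c 1 + b 3 * c 0 : ℝ) : ℂ) ∈ _
        push_cast
        exact add_mem (add_mem (add_mem (mul_mem (hb 0) (hc 3)) (mul_mem (hb 1) (hc 2)))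
          (mul_mem (hb 2) (hc 1))) (mul_mem (hb 3) (hc 0))
    · rw [expand (fun j => ((b j : ℝ) : ℂ)), expand (fun j => ((c j : ℝ) : ℂ)), expand]
      simp only [Matrix.cons_val_zero, Matrix.cons_val_one, Matrix.head_cons,
        Matrix.cons_val_two, Matrix.tail_cons, Matrix.cons_val_three]
      push_cast
      linear_combination (((b 1 : ℂ) * c 3 + (b 2 : ℂ) * c 2 + (b 3 : ℂ) * c 1)
        + ((b 2 : ℂ) * c 3 + (b 3 : ℂ) * c 2) * ζ + (b 3 : ℂ) * c 3 * ζ ^ 2) * zeta_pow_four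

end RepAux

/-- Every element `r` of `ℤ[1/2, e^{iπ/4}]` can be written as
`r = a₀e^{iα₀} + a₁e^{iα₁} + a₂e^{iα₂} + a₃e^{iα₃}` with each `aⱼ` a nonnegative element of
`ℤ[1/2]` and each `αⱼ` equal to `jπ/4` or `jπ/4 + π`. -/
theorem representation_nonneg_coeffs :
    ∀ r ∈ Subring.closure
        ({(1 / 2 : ℂ), Complex.exp (((π / 4 : ℝ) : ℂ) * Complex.I)} : Set ℂ),
      ∃ (a : Fin 4 → ℝ) (α : Fin 4 → ℝ),
        (∀ j, 0 ≤ a j) ∧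
        (∀ j, ((a j : ℂ)) ∈ Subring.closure ({(1 / 2 : ℂ)} : Set ℂ)) ∧
        (∀ j : Fin 4, α j = (j : ℝ) * π / 4 ∨ α j = (j : ℝ) * π / 4 + π) ∧
        r = ∑ j : Fin 4, (a j : ℂ) * Complex.exp (((α j : ℝ) : ℂ) * Complex.I) := by
  intro r hr
  obtain ⟨b, hb, rfl⟩ := RepAux.key r hr
  refine ⟨fun j => |b j|, fun j => if 0 ≤ b j then (j : ℝ) * π / 4 else (j : ℝ) * π / 4 + π,
    fun j => abs_nonneg _, fun j => ?_, fun j => ?_, ?_⟩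
  · dsimp only
    by_cases h : 0 ≤ b j
    · rw [abs_of_nonneg h]; exact hb j
    · rw [abs_of_neg (not_le.mp h)]; push_cast; exact neg_mem (hb j)
  · dsimp only
    by_cases h : 0 ≤ b j
    · exact Or.inl (if_pos h)
    · exact Or.inr (if_neg h)
  · refine Finset.sum_congr rfl fun j _ => ?_
    dsimp only
    by_cases h : 0 ≤ b j
    · rw [if_pos h, abs_of_nonneg h, RepAux.zeta_pow]
    · rw [if_neg h, abs_of_neg (not_le.mp h)]
      have : Complex.exp ((((j : ℝ) * π / 4 + π : ℝ) : ℂ) * Complex.I)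
          = -RepAux.ζ ^ (j : ℕ) := by
        rw [← RepAux.zeta_pow j]
        have harg : ((((j : ℝ) * π / 4 + π : ℝ)) : ℂ) * Complex.I
            = (((j : ℝ) * π / 4 : ℝ) : ℂ) * Complex.I + (π : ℂ) * Complex.I := by
          push_cast; ring
        rw [harg, Complex.exp_add, Complex.exp_pi_mul_I]
        ring
      rw [this]; push_cast; ring
end

section
/- √2 = e^{iπ/4} + e^{−iπ/4} belongs to the subring ℤ[i, 1/√2] of ℂ, but √2 does not belong to the subring ℤ[1/2]. -/
open Real

theorem Complex.exp_ofReal_mul_I_add_exp_neg (x : ℝ) :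
    Complex.exp ((x : ℂ) * Complex.I) + Complex.exp (((-x : ℝ) : ℂ) * Complex.I) =
      ((2 * Real.cos x : ℝ) : ℂ) := by
  push_cast
  rw [Complex.two_cos, neg_mul]

theorem two_mul_cos_pi_div_four : 2 * Real.cos (π / 4) = √2 := by
  rw [Real.cos_pi_div_four]
  ring

/-- `x = x² · x⁻¹` holds in any division ring, including at `x = 0`. -/
theorem Subring.mem_of_inv_mem_of_sq_eq_intCast {K : Type*} [DivisionRing K] {S : Subring K}
    {x : K} {n : ℤ} (hx : x ^ 2 = n) (hinv : x⁻¹ ∈ S) : x ∈ S := by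
  rw [← mul_self_mul_inv x, ← sq, hx]
  exact mul_mem (intCast_mem S n) hinv

theorem Subring.exists_ratCast_eq_of_mem_closure_image_ratCast {K : Type*} [DivisionRing K]
    [CharZero K] {s : Set ℚ} {x : K} (hx : x ∈ Subring.closure (((↑) : ℚ → K) '' s)) :
    ∃ q : ℚ, (q : K) = x :=
  (Subring.closure_le (t := (Rat.castHom K).range)).2 (Set.image_subset_range _ s) hx

/-- `√2 = e^{iπ/4} + e^{−iπ/4}` belongs to `ℤ[i, 1/√2]` but not to `ℤ[1/2]`. -/
theorem sqrt_two_mem_counterexample :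
    (Real.sqrt 2 : ℂ) =
        Complex.exp (((π / 4 : ℝ) : ℂ) * Complex.I) +
          Complex.exp (((-(π / 4) : ℝ) : ℂ) * Complex.I) ∧
    (Real.sqrt 2 : ℂ) ∈ Subring.closure ({Complex.I, ((Real.sqrt 2 : ℂ))⁻¹} : Set ℂ) ∧
    (Real.sqrt 2 : ℂ) ∉ Subring.closure ({(1 / 2 : ℂ)} : Set ℂ) := by
  refine ⟨?_, ?_, ?_⟩
  · rw [Complex.exp_ofReal_mul_I_add_exp_neg, two_mul_cos_pi_div_four]
  · have hsq : (√2 : ℂ) ^ 2 = ((2 : ℤ) : ℂ) := by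
      rw [← Complex.ofReal_pow, Real.sq_sqrt zero_le_two]
      norm_num
    exact Subring.mem_of_inv_mem_of_sq_eq_intCast hsq (Subring.subset_closure (by simp))
  · intro hmem
    have hhalf : ({(1 / 2 : ℂ)} : Set ℂ) = ((↑) : ℚ → ℂ) '' {1 / 2} := by simp
    rw [hhalf] at hmem
    obtain ⟨q, hq⟩ := Subring.exists_ratCast_eq_of_mem_closure_image_ratCast hmem
    exact irrational_sqrt_two.ne_rat q (by exact_mod_cast hq.symm)
end
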